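/- Let g be a density on (0,∞) with p(ζ) = ∫₀^ζ g and v(ζ) = ∫₀^ζ p. Suppose v is strictly increasing on the set where it is positive, ζ_n satisfies v(ζ_n) = λ/n with p(ζ_n) > 0, and r_n(ζ) = λ/p(ζ) + nζ − n·v(ζ)/p(ζ). Then r_n(ζ) ≥ r_n(ζ_n) = n·ζ_n for all ζ > 0 with p(ζ) > 0; i.e., inf_{ζ>0} r_n(ζ) = n·ζ_n. -/

import Mathlib

/-!
Since `v' = p` is nondecreasing, `v` is convex, so its graph lies above the tangent line at any
`ζ` with `p ζ > 0`: `v ζₙ - v ζ ≥ p ζ (ζₙ - ζ)`. Dividing by `p ζ` and using `λ = n v ζₙ` gives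
`r ζ ≥ n ζₙ`, with equality at `ζ = ζₙ`.
-/

open MeasureTheory Set intervalIntegral

theorem MonotoneOn.mul_sub_le_intervalIntegral {f : ℝ → ℝ} {a b : ℝ}
    (hf : MonotoneOn f (uIcc a b)) : f a * (b - a) ≤ ∫ x in a..b, f x := by
  have hfi : IntervalIntegrable f volume a b := hf.intervalIntegrable
  rcases le_total a b with hab | hba
  · have := integral_mono_on hab intervalIntegrable_const hfi fun x hx =>
      hf left_mem_uIcc (by rwa [uIcc_of_le hab]) hx.1
    simpa [intervalIntegral.integral_const, mul_comm] using this
  · have := integral_mono_on hba hfi.symm intervalIntegrable_const fun x hx =>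
      hf (by rwa [uIcc_of_ge hba]) left_mem_uIcc hx.2
    rw [integral_symm]
    simp only [intervalIntegral.integral_const, smul_eq_mul] at this
    linarith

section CumulativeIntegral

variable {F f : ℝ → ℝ} (hF : ∀ x, F x = ∫ t in Ioc (0 : ℝ) x, f t)
include hF

theorem pos_of_cumulative_pos {x : ℝ} (hx : 0 < F x) : 0 < x := by
  by_contra! h
  rw [hF, Ioc_eq_empty (not_lt.2 h), Measure.restrict_empty, integral_zero_measure] at hx
  exact hx.false

theorem integrableOn_of_cumulative_pos {M : ℝ} (hM : 0 < F M) : IntegrableOn f (Ioc 0 M) :=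
  Integrable.of_integral_ne_zero (hF M ▸ hM.ne')

theorem cumulative_sub_eq_intervalIntegral {M a b : ℝ} (hf : IntegrableOn f (Ioc 0 M))
    (ha : a ∈ Icc 0 M) (hb : b ∈ Icc 0 M) : F b - F a = ∫ t in a..b, f t := by
  have hfi : IntervalIntegrable f volume 0 M :=
    (intervalIntegrable_iff_integrableOn_Ioc_of_le (ha.1.trans ha.2)).2 hf
  have hsub {c : ℝ} (hc : c ∈ Icc 0 M) : IntervalIntegrable f volume 0 c :=
    hfi.mono_set (uIcc_subset_uIcc left_mem_uIcc (mem_uIcc_of_le hc.1 hc.2))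
  rw [hF, hF, ← integral_of_le ha.1, ← integral_of_le hb.1]
  exact integral_interval_sub_left (hsub hb) (hsub ha)

theorem monotoneOn_cumulative (hf : ∀ t, 0 ≤ f t) {M : ℝ} (hM : 0 < F M) :
    MonotoneOn F (Icc 0 M) := fun a ha b hb hab => by
  have h := cumulative_sub_eq_intervalIntegral hF (integrableOn_of_cumulative_pos hF hM) ha hb
  linarith [integral_nonneg (μ := volume) hab fun t _ => hf t]

end CumulativeIntegral

theorem mul_sub_le_sub_of_cumulative {g p v : ℝ → ℝ} (hg : ∀ μ, 0 ≤ g μ)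
    (hp : ∀ ζ, p ζ = ∫ μ in Ioc (0 : ℝ) ζ, g μ) (hv : ∀ ζ, v ζ = ∫ μ in Ioc (0 : ℝ) ζ, p μ)
    {a b : ℝ} (ha : 0 < p a) (hb : 0 < p b) : p a * (b - a) ≤ v b - v a := by
  have hM : 0 < p (max a b) := by rcases max_choice a b with h | h <;> rwa [h]
  have hmono := monotoneOn_cumulative hp hg hM
  have hpint : IntegrableOn p (Ioc 0 (max a b)) :=
    (hmono.integrableOn_isCompact isCompact_Icc).mono_set Ioc_subset_Icc_self
  have ha' : a ∈ Icc 0 (max a b) := ⟨(pos_of_cumulative_pos hp ha).le, le_max_left a b⟩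
  have hb' : b ∈ Icc 0 (max a b) := ⟨(pos_of_cumulative_pos hp hb).le, le_max_right a b⟩
  rw [cumulative_sub_eq_intervalIntegral hv hpint ha' hb']
  exact (hmono.mono (uIcc_subset_Icc ha' hb')).mul_sub_le_intervalIntegral

theorem stmt_2_general (g p v : ℝ → ℝ) (lam n : ℝ) (hn : 0 < n)
    (hg : ∀ μ, 0 ≤ g μ)
    (hp : ∀ ζ, p ζ = ∫ μ in Ioc (0 : ℝ) ζ, g μ)
    (hv : ∀ ζ, v ζ = ∫ μ in Ioc (0 : ℝ) ζ, p μ)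
    (r : ℝ → ℝ)
    (hr : ∀ ζ, 0 < p ζ → r ζ = lam / p ζ + n * ζ - n * v ζ / p ζ)
    (ζn : ℝ) (h1 : v ζn = lam / n) (h2 : 0 < p ζn) :
    r ζn = n * ζn ∧ ∀ ζ, 0 < ζ → 0 < p ζ → n * ζn ≤ r ζ := by
  have hlam : lam = n * v ζn := by rw [h1]; field_simp
  refine ⟨by rw [hr ζn h2, hlam]; field_simp; ring, fun ζ _ hpζ => ?_⟩
  have hslope : ζn - ζ ≤ (v ζn - v ζ) / p ζ := by
    rw [le_div_iff₀ hpζ, mul_comm]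
    exact mul_sub_le_sub_of_cumulative hg hp hv hpζ h2
  calc n * ζn = n * (ζn - ζ) + n * ζ := by ring
    _ ≤ n * ((v ζn - v ζ) / p ζ) + n * ζ := by gcongr
    _ = r ζ := by rw [hr ζ hpζ, hlam]; ring

/-- if `v` is strictly increasing where positive and `v ζₙ = λ/n`
with `p ζₙ > 0`, then `r(ζ) ≥ r(ζₙ) = n ζₙ` for all `ζ > 0` with `p(ζ) > 0`. -/
theorem stmt_2 (g p v : ℝ → ℝ) (lam n : ℝ) (hlam : 0 < lam) (hn : 0 < n)
    (hg : ∀ μ, 0 ≤ g μ)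
    (hp : ∀ ζ, p ζ = ∫ μ in Ioc (0 : ℝ) ζ, g μ)
    (hv : ∀ ζ, v ζ = ∫ μ in Ioc (0 : ℝ) ζ, p μ)
    (hmono : StrictMonoOn v {x | 0 < v x})
    (r : ℝ → ℝ)
    (hr : ∀ ζ, 0 < p ζ → r ζ = lam / p ζ + n * ζ - n * v ζ / p ζ)
    (ζn : ℝ) (hζn : 0 < ζn) (h1 : v ζn = lam / n) (h2 : 0 < p ζn) :
    r ζn = n * ζn ∧ ∀ ζ, 0 < ζ → 0 < p ζ → n * ζn ≤ r ζ :=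
  stmt_2_general g p v lam n hn hg hp hv r hr ζn h1 h2
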